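/- arXiv:2010.16289 — 2 statements merged into one kernel-verified Lean document; each statement's English description precedes it below -/
import Mathlib

section
/- (Serfling-type inequality.) For every t ≥ 0, P_{κ,n}( (1/n) Σ_{i=1}^n ω_i − E_{κ,n} ω_1 ≥ t ) ≤ exp(− n t² / (4 (1 − n/N) |𝒳|²)), and the same bound holds for P_{κ,n}( (1/n) Σ_{i=1}^n ω_i − E_{κ,n} ω_1 ≤ −t ). -/
/-!
Reveal the sample one coordinate at a time. Given `ω 0 = x ℓ`, the remaining coordinates are
uniform on the multislice with `κ ℓ` lowered by one, and the centred partial sum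
`S_{n+1} - (n+1) μ` splits as `c (x ℓ - μ)` plus the centred partial sum `S'_n - n μ'` of that
smaller multislice, where `c = (M - n) / M` and `M = N - 1`. Hoeffding's lemma for `ω 0`, whose
mean is `μ` by exchangeability, and induction on `n` give
`E exp (s (S_n - n μ)) ≤ exp ((b - a)² n (1 - n / N) s² / 4)`;
the inequality `c² / 2 + n (1 - n / M) ≤ (n + 1) (1 - (n + 1) / (M + 1))` is what makes the
exponents add up. The Chernoff bound for sub-Gaussian variables then gives both tails.
-/

open Finset Real
open scoped Classical

noncomputable section

/-- The multislice `Ω_κ ⊆ 𝒳^N`: vectors with values in `{x ℓ}` where the value `x ℓ`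
appears exactly `κ ℓ` times. -/
def multislice (L N : ℕ) (κ : Fin L → ℕ) (x : Fin L → ℝ) : Finset (Fin N → ℝ) :=
  (Fintype.piFinset fun _ : Fin N => Finset.image x Finset.univ).filter
    (fun ω => ∀ ℓ : Fin L, (Finset.univ.filter fun i => ω i = x ℓ).card = κ ℓ)

/-- Expectation with respect to the uniform distribution on a finite set. -/
def uexpect {α : Type*} (Ω : Finset α) (f : α → ℝ) : ℝ := (∑ ω ∈ Ω, f ω) / Ω.card

/-- Probability of an event with respect to the uniform distribution on a finite set. -/
def uprob {α : Type*} (Ω : Finset α) (p : α → Prop) : ℝ :=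
  ((Ω.filter p).card : ℝ) / Ω.card

/-- `Ω_{κ,n}`: the image of the multislice under the projection onto the first `n`
coordinates (`n` out of `N` sampling without replacement). -/
def msProj (L N n : ℕ) (κ : Fin L → ℕ) (x : Fin L → ℝ) (hn : n ≤ N) :
    Finset (Fin n → ℝ) :=
  (multislice L N κ x).image (fun ω => fun i : Fin n => ω (Fin.castLE hn i))

/-- Expectation `E_{κ,n}` with respect to `P_{κ,n}`, the push-forward of the uniform
distribution `P_κ` on the multislice under the projection onto the first `n` coordinates. -/
def msExpectN (L N n : ℕ) (κ : Fin L → ℕ) (x : Fin L → ℝ) (hn : n ≤ N)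
    (f : (Fin n → ℝ) → ℝ) : ℝ :=
  uexpect (multislice L N κ x) (fun ω => f (fun i : Fin n => ω (Fin.castLE hn i)))

/-- Probability `P_{κ,n}` of an event, i.e. the push-forward of the uniform distribution
`P_κ` on the multislice under the projection onto the first `n` coordinates. -/
def msProbN (L N n : ℕ) (κ : Fin L → ℕ) (x : Fin L → ℝ) (hn : n ≤ N)
    (p : (Fin n → ℝ) → Prop) : ℝ :=
  uprob (multislice L N κ x) (fun ω => p (fun i : Fin n => ω (Fin.castLE hn i)))

open Function ProbabilityTheory MeasureTheory

-- For `M = 0` (hence `n = 0`) the coefficient is `0 / 0 = 0`, and `hμ'` forces `y = μ`.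
lemma add_sub_succ_mul_eq {M n : ℕ} (hn : n ≤ M) {y μ μ' S : ℝ}
    (hμ' : M * μ' = (M + 1) * μ - y) :
    y + S - (n + 1) * μ = (M - n) / M * (y - μ) + (S - n * μ') := by
  rcases Nat.eq_zero_or_pos M with rfl | hM
  · obtain rfl : n = 0 := by omega
    simp only [CharP.cast_eq_zero, zero_mul, zero_add, one_mul] at hμ'
    simp only [CharP.cast_eq_zero, zero_add, one_mul, sub_self, div_zero, zero_mul, sub_zero]
    linarith
  · have : (M : ℝ) ≠ 0 := by positivity
    field_simp
    linear_combination (n : ℝ) * hμ'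

lemma sq_div_two_add_mul_one_sub_div_le {n M : ℕ} (hn : n ≤ M) :
    ((M - n) / M : ℝ) ^ 2 / 2 + n * (1 - n / M) ≤ (n + 1) * (1 - (n + 1) / (M + 1)) := by
  rcases Nat.eq_zero_or_pos M with rfl | hM
  · obtain rfl : n = 0 := by omega
    simp
  · have hM1 : (1 : ℝ) ≤ M := by exact_mod_cast hM
    have key : ((n : ℝ) + 1) * (1 - (n + 1) / (M + 1)) - ((M - n) ^ 2 / M ^ 2 / 2 + n * (1 - n / M))
        = ((M : ℝ) - n) ^ 2 * (M - 1) / (2 * M ^ 2 * (M + 1)) := by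
      field_simp
      ring
    rw [div_pow, ← sub_nonneg, key]
    have : (0 : ℝ) ≤ M - 1 := by linarith
    positivity

lemma neg_sq_div_le {n t W D : ℝ} (hn : 0 < n) (hW : 0 ≤ W) (hD : 0 ≤ D) :
    -(n * t) ^ 2 / (2 * (D * (n * W) / 2)) ≤ -(n * t ^ 2) / (4 * W * D) := by
  rw [neg_div, neg_div, neg_le_neg_iff]
  calc n * t ^ 2 / (4 * W * D) = n * t ^ 2 / (W * D) / 4 := by
        rw [div_div, mul_comm _ (4 : ℝ), mul_assoc]
    _ ≤ n * t ^ 2 / (W * D) := div_le_self (by positivity) (by norm_num)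
    _ = (n * t) ^ 2 / (2 * (D * (n * W) / 2)) := by
        rw [← mul_div_mul_left _ _ hn.ne']
        congr 1 <;> ring

section UniformMeasure

variable {α : Type*}

lemma integral_uniformOfFintype_coe [MeasurableSpace α] [MeasurableSingletonClass α]
    {Ω : Finset α} [Nonempty Ω] (f : α → ℝ) :
    ∫ ω : Ω, f ω ∂(PMF.uniformOfFintype Ω).toMeasure = uexpect Ω f := by
  simp [PMF.integral_eq_sum, PMF.uniformOfFintype_apply, uexpect, ← Finset.mul_sum,
    Finset.sum_attach Ω f, div_eq_inv_mul]

lemma measureReal_uniformOfFintype_coe [MeasurableSpace α] [MeasurableSingletonClass α]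
    {Ω : Finset α} [Nonempty Ω] (p : α → Prop) :
    (PMF.uniformOfFintype Ω).toMeasure.real {ω : Ω | p ω} = uprob Ω p := by
  rw [← integral_indicator_one (Set.toFinite _).measurableSet]
  have hind : ({ω : Ω | p ω}.indicator 1 : Ω → ℝ) = fun ω : Ω => if p ω then (1 : ℝ) else 0 := by
    ext; simp [Set.indicator_apply]
  rw [hind, integral_uniformOfFintype_coe (fun ω => if p ω then (1 : ℝ) else 0), uexpect, uprob,
    sum_boole]

lemma hasSubgaussianMGF_uniformOfFintype [MeasurableSpace α] [MeasurableSingletonClass α]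
    {Ω : Finset α} [Nonempty Ω] {X : α → ℝ} {c : NNReal}
    (h : ∀ s, ∑ ω ∈ Ω, exp (s * X ω) ≤ #Ω * exp (c * s ^ 2 / 2)) :
    HasSubgaussianMGF (fun ω : Ω => X ω) c (PMF.uniformOfFintype Ω).toMeasure where
  integrable_exp_mul _ := .of_finite
  mgf_le s := by
    have hcard : (0 : ℝ) < #Ω := by exact_mod_cast card_pos.mpr (nonempty_coe_sort.mp ‹_›)
    rw [mgf, PMF.integral_eq_sum]
    simp only [PMF.uniformOfFintype_apply, Fintype.card_coe, smul_eq_mul, ← Finset.mul_sum,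
      Finset.sum_coe_sort Ω fun ω => exp (s * X ω), ENNReal.toReal_inv, ENNReal.toReal_natCast,
      inv_mul_le_iff₀ hcard]
    exact h s

lemma sum_exp_sub_uexpect_le {Ω : Finset α} (hΩ : Ω.Nonempty) {f : α → ℝ} {a b : ℝ}
    (hf : ∀ ω ∈ Ω, f ω ∈ Set.Icc a b) (s : ℝ) :
    ∑ ω ∈ Ω, exp (s * (f ω - uexpect Ω f)) ≤ #Ω * exp (s ^ 2 * (b - a) ^ 2 / 8) := by
  let _ : MeasurableSpace α := ⊤
  have : Nonempty Ω := hΩ.to_subtype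
  have hoeff := (hasSubgaussianMGF_of_mem_Icc (μ := (PMF.uniformOfFintype Ω).toMeasure)
    (X := fun ω : Ω => f ω) (measurable_of_finite _).aemeasurable
    (ae_of_all _ fun ω => hf ω ω.2)).mgf_le s
  rw [integral_uniformOfFintype_coe, mgf, PMF.integral_eq_sum] at hoeff
  simp only [PMF.uniformOfFintype_apply, Fintype.card_coe, smul_eq_mul, ← Finset.mul_sum,
    Finset.sum_coe_sort Ω fun ω => exp (s * (f ω - uexpect Ω f))] at hoeff
  have hcard : (0 : ℝ) < #Ω := by exact_mod_cast hΩ.card_pos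
  have hab : (((‖b - a‖₊ / 2) ^ 2 : NNReal) : ℝ) * s ^ 2 / 2 = s ^ 2 * (b - a) ^ 2 / 8 := by
    push_cast; rw [Real.norm_eq_abs, div_pow, sq_abs]; ring
  rwa [hab, ENNReal.toReal_inv, ENNReal.toReal_natCast, inv_mul_le_iff₀ hcard] at hoeff

lemma uprob_le_of_sum_exp_le [MeasurableSpace α] [MeasurableSingletonClass α] {Ω : Finset α}
    {X : α → ℝ} {c : ℝ} (hc : 0 ≤ c) (h : ∀ s, ∑ ω ∈ Ω, exp (s * X ω) ≤ #Ω * exp (c * s ^ 2 / 2))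
    {ε : ℝ} (hε : 0 ≤ ε) :
    uprob Ω (fun ω => ε ≤ X ω) ≤ exp (-ε ^ 2 / (2 * c)) ∧
      uprob Ω (fun ω => X ω ≤ -ε) ≤ exp (-ε ^ 2 / (2 * c)) := by
  rcases Ω.eq_empty_or_nonempty with rfl | hΩ
  · simp [uprob, exp_nonneg]
  have : Nonempty Ω := hΩ.to_subtype
  have hX := hasSubgaussianMGF_uniformOfFintype (c := ⟨c, hc⟩) h
  rw [← measureReal_uniformOfFintype_coe, ← measureReal_uniformOfFintype_coe]
  have hlow : {ω : Ω | X ω ≤ -ε} = {ω | ε ≤ (-fun ω : Ω => X ω) ω} := by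
    ext; simp [le_neg]
  exact ⟨hX.measure_ge_le hε, hlow ▸ hX.neg.measure_ge_le hε⟩

end UniformMeasure

section Multislice

variable {L N : ℕ} {κ : Fin L → ℕ} {x : Fin L → ℝ}

lemma mem_multislice {ω : Fin N → ℝ} :
    ω ∈ multislice L N κ x ↔ (∀ i, ω i ∈ Set.range x) ∧ ∀ ℓ, #{i | ω i = x ℓ} = κ ℓ := by
  simp [multislice, Fintype.mem_piFinset, Set.mem_range, eq_comm]

lemma sum_comp_eq_of_mem_multislice {β : Type*} [AddCommMonoid β] (hx : Injective x)
    {ω : Fin N → ℝ} (hω : ω ∈ multislice L N κ x) (g : ℝ → β) :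
    ∑ i, g (ω i) = ∑ ℓ, κ ℓ • g (x ℓ) := by
  obtain ⟨hrange, hcount⟩ := mem_multislice.mp hω
  rw [← Finset.sum_fiberwise_of_maps_to (t := univ.image x) (g := ω)
    (fun i _ => by simpa [eq_comm] using hrange i), Finset.sum_image (fun _ _ _ _ h => hx h)]
  refine Finset.sum_congr rfl fun ℓ _ => ?_
  rw [Finset.sum_congr rfl fun i hi => by rw [(Finset.mem_filter.mp hi).2], Finset.sum_const,
    hcount]

lemma sum_eq_of_mem_multislice (hx : Injective x) {ω : Fin N → ℝ}
    (hω : ω ∈ multislice L N κ x) : ∑ ℓ, κ ℓ = N := by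
  simpa using (sum_comp_eq_of_mem_multislice hx hω fun _ => (1 : ℕ)).symm

lemma sum_apply_eq_of_mem_multislice (hx : Injective x) {ω : Fin N → ℝ}
    (hω : ω ∈ multislice L N κ x) : ∑ i, ω i = ∑ ℓ, (κ ℓ : ℝ) * x ℓ := by
  simpa using sum_comp_eq_of_mem_multislice hx hω id

lemma comp_perm_mem_multislice_iff (σ : Equiv.Perm (Fin N)) {ω : Fin N → ℝ} :
    ω ∘ σ ∈ multislice L N κ x ↔ ω ∈ multislice L N κ x := by
  rw [mem_multislice, mem_multislice]
  refine and_congr ⟨fun h i => by simpa using h (σ.symm i), fun h i => h (σ i)⟩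
    (forall_congr' fun ℓ => ?_)
  rw [Finset.card_equiv σ (t := {i | ω i = x ℓ}) (by simp)]

lemma sum_multislice_comp_perm {β : Type*} [AddCommMonoid β] (σ : Equiv.Perm (Fin N))
    (F : (Fin N → ℝ) → β) :
    ∑ ω ∈ multislice L N κ x, F (ω ∘ σ) = ∑ ω ∈ multislice L N κ x, F ω :=
  Finset.sum_nbij' (· ∘ σ) (· ∘ σ.symm)
    (fun _ hω => (comp_perm_mem_multislice_iff σ).mpr hω)
    (fun ω hω => (comp_perm_mem_multislice_iff σ.symm).mpr hω)
    (fun ω _ => by ext; simp) (fun ω _ => by ext; simp) (fun _ _ => rfl)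

def multisliceMean (κ : Fin L → ℕ) (x : Fin L → ℝ) : ℝ :=
  (∑ ℓ, (κ ℓ : ℝ) * x ℓ) / ∑ ℓ, (κ ℓ : ℝ)

lemma sum_mul_multisliceMean : (∑ ℓ, (κ ℓ : ℝ)) * multisliceMean κ x = ∑ ℓ, (κ ℓ : ℝ) * x ℓ := by
  by_cases h : ∑ ℓ, (κ ℓ : ℝ) = 0
  · have hκ : ∀ ℓ, (κ ℓ : ℝ) = 0 := fun ℓ =>
      (Finset.sum_eq_zero_iff_of_nonneg fun _ _ => Nat.cast_nonneg _).mp h ℓ (mem_univ ℓ)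
    simp [hκ]
  · exact mul_div_cancel₀ _ h

lemma uexpect_multislice_apply (hx : Injective x) (hΩ : (multislice L N κ x).Nonempty)
    (i : Fin N) : uexpect (multislice L N κ x) (fun ω => ω i) = multisliceMean κ x := by
  have hswap (j : Fin N) : ∑ ω ∈ multislice L N κ x, ω j = ∑ ω ∈ multislice L N κ x, ω i := by
    simpa using sum_multislice_comp_perm (Equiv.swap i j) (fun ω => ω i)
  have hsum : (N : ℝ) * ∑ ω ∈ multislice L N κ x, ω i
      = #(multislice L N κ x) * ∑ ℓ, (κ ℓ : ℝ) * x ℓ := by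
    calc (N : ℝ) * ∑ ω ∈ multislice L N κ x, ω i
        = ∑ j, ∑ ω ∈ multislice L N κ x, ω j := by simp [hswap]
      _ = ∑ ω ∈ multislice L N κ x, ∑ j, ω j := Finset.sum_comm
      _ = _ := by
        rw [Finset.sum_congr rfl fun ω hω => sum_apply_eq_of_mem_multislice hx hω,
          Finset.sum_const, nsmul_eq_mul]
  obtain ⟨ω, hω⟩ := hΩ
  have hN : ∑ ℓ, (κ ℓ : ℝ) = N := by exact_mod_cast sum_eq_of_mem_multislice hx hω
  have hN0 : (N : ℝ) ≠ 0 := by exact_mod_cast i.pos.ne'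
  have hcard : (#(multislice L N κ x) : ℝ) ≠ 0 := by exact_mod_cast (card_pos.mpr ⟨ω, hω⟩).ne'
  rw [uexpect, multisliceMean, hN, div_eq_div_iff hcard hN0]
  linarith

lemma sum_exp_mul_apply_sub_multisliceMean_le (hx : Injective x) {a b : ℝ} (ha : ∀ ℓ, a ≤ x ℓ)
    (hb : ∀ ℓ, x ℓ ≤ b) (i : Fin N) (r : ℝ) :
    ∑ ω ∈ multislice L N κ x, exp (r * (ω i - multisliceMean κ x))
      ≤ #(multislice L N κ x) * exp (r ^ 2 * (b - a) ^ 2 / 8) := by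
  rcases (multislice L N κ x).eq_empty_or_nonempty with hΩ | hΩ
  · simp [hΩ]
  rw [← uexpect_multislice_apply hx hΩ i]
  refine sum_exp_sub_uexpect_le hΩ (fun ω hω => ?_) r
  obtain ⟨ℓ, hℓ⟩ := (mem_multislice.mp hω).1 i
  exact ⟨hℓ ▸ ha ℓ, hℓ ▸ hb ℓ⟩

lemma sum_multislice_eq_sum_fiber {β : Type*} [AddCommMonoid β] (hx : Injective x)
    (i : Fin N) (F : (Fin N → ℝ) → β) :
    ∑ ω ∈ multislice L N κ x, F ω = ∑ ℓ, ∑ ω ∈ multislice L N κ x with ω i = x ℓ, F ω := by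
  rw [← Finset.sum_fiberwise_of_maps_to (t := univ.image x) (g := fun ω => ω i)
    (fun ω hω => by simpa [eq_comm] using (mem_multislice.mp hω).1 i),
    Finset.sum_image (fun _ _ _ _ h => hx h)]

lemma pos_of_mem_multislice_of_apply_eq {ω : Fin N → ℝ} (hω : ω ∈ multislice L N κ x)
    {i : Fin N} {ℓ : Fin L} (hi : ω i = x ℓ) : 0 < κ ℓ := by
  rw [← (mem_multislice.mp hω).2 ℓ]
  exact card_pos.mpr ⟨i, by simpa using hi⟩

lemma cons_mem_multislice_iff {M : ℕ} (hx : Injective x) {ℓ : Fin L} (hℓ : 0 < κ ℓ)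
    {ω : Fin M → ℝ} :
    (Fin.cons (x ℓ) ω : Fin (M + 1) → ℝ) ∈ multislice L (M + 1) κ x ↔
      ω ∈ multislice L M (update κ ℓ (κ ℓ - 1)) x := by
  simp only [mem_multislice, Fin.forall_fin_succ, Fin.cons_zero, Fin.cons_succ,
    Set.mem_range_self, true_and, Fin.card_filter_univ_succ']
  refine and_congr_right fun _ => forall_congr' fun ℓ' => ?_
  rcases eq_or_ne ℓ' ℓ with rfl | hne
  · simp only [if_true, update_self]
    omega
  · simp [hx.ne hne.symm, update_of_ne hne]

lemma sum_fiber_zero_eq_sum_cons {β : Type*} [AddCommMonoid β] {M : ℕ}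
    (hx : Injective x) {ℓ : Fin L} (hℓ : 0 < κ ℓ) (F : (Fin (M + 1) → ℝ) → β) :
    ∑ ω ∈ multislice L (M + 1) κ x with ω 0 = x ℓ, F ω
      = ∑ ω ∈ multislice L M (update κ ℓ (κ ℓ - 1)) x, F (Fin.cons (x ℓ) ω) := by
  symm
  refine Finset.sum_nbij' (fun ω => (Fin.cons (x ℓ) ω : Fin (M + 1) → ℝ)) Fin.tail
    (fun ω hω => ?_) (fun ω hω => ?_)
    (fun ω _ => Fin.tail_cons _ _) (fun ω hω => ?_) (fun _ _ => rfl)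
  · simpa [cons_mem_multislice_iff hx hℓ] using hω
  · obtain ⟨hω, h0⟩ := mem_filter.mp hω
    rw [← Fin.cons_self_tail ω, h0, cons_mem_multislice_iff hx hℓ] at hω
    exact hω
  · rw [← (mem_filter.mp hω).2, Fin.cons_self_tail]

lemma sum_update_pred_mul {ℓ : Fin L} (hℓ : 0 < κ ℓ) (g : Fin L → ℝ) :
    ∑ ℓ', (update κ ℓ (κ ℓ - 1) ℓ' : ℝ) * g ℓ' = ∑ ℓ', (κ ℓ' : ℝ) * g ℓ' - g ℓ := by
  have h (ℓ' : Fin L) :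
      (update κ ℓ (κ ℓ - 1) ℓ' : ℝ) = κ ℓ' - if ℓ' = ℓ then 1 else 0 := by
    rcases eq_or_ne ℓ' ℓ with rfl | hne
    · simp [Nat.cast_sub hℓ]
    · simp [hne]
  simp [h, sub_mul, Finset.sum_sub_distrib]

lemma card_fiber_zero_eq {M : ℕ} (hx : Injective x) {ℓ : Fin L} (hℓ : 0 < κ ℓ) :
    #{ω ∈ multislice L (M + 1) κ x | ω 0 = x ℓ}
      = #(multislice L M (update κ ℓ (κ ℓ - 1)) x) := by
  simpa using sum_fiber_zero_eq_sum_cons (M := M) hx hℓ fun _ => (1 : ℕ)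

lemma sum_card_fiber_mul (hx : Injective x) (i : Fin N) (g : ℝ → ℝ) :
    ∑ ℓ, (#{ω ∈ multislice L N κ x | ω i = x ℓ} : ℝ) * g (x ℓ)
      = ∑ ω ∈ multislice L N κ x, g (ω i) := by
  rw [sum_multislice_eq_sum_fiber hx i]
  refine sum_congr rfl fun ℓ _ => ?_
  rw [sum_congr rfl fun ω hω => by rw [(mem_filter.mp hω).2], sum_const, nsmul_eq_mul]

lemma natCast_mul_multisliceMean_update {M : ℕ} (hκ : ∑ ℓ, (κ ℓ : ℝ) = M + 1) {ℓ : Fin L}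
    (hℓ : 0 < κ ℓ) :
    (M : ℝ) * multisliceMean (update κ ℓ (κ ℓ - 1)) x
      = (M + 1) * multisliceMean κ x - x ℓ := by
  have hM : ∑ ℓ', (update κ ℓ (κ ℓ - 1) ℓ' : ℝ) = M := by
    simpa [hκ] using sum_update_pred_mul hℓ 1
  rw [← hκ, ← hM, sum_mul_multisliceMean, sum_mul_multisliceMean, sum_update_pred_mul hℓ x]

lemma sum_fiber_exp_partialSum_eq {M n : ℕ} (hx : Injective x) (hn : n ≤ M)
    (h : n + 1 ≤ M + 1) (hκ : ∑ ℓ, (κ ℓ : ℝ) = M + 1) {ℓ : Fin L} (hℓ : 0 < κ ℓ) (s : ℝ) :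
    ∑ ω ∈ multislice L (M + 1) κ x with ω 0 = x ℓ,
        exp (s * (∑ i : Fin (n + 1), ω (Fin.castLE h i) - (n + 1 : ℕ) * multisliceMean κ x))
      = exp (s * ((M - n) / M) * (x ℓ - multisliceMean κ x)) *
          ∑ ω ∈ multislice L M (update κ ℓ (κ ℓ - 1)) x,
            exp (s * (∑ i : Fin n, ω (Fin.castLE hn i)
              - n * multisliceMean (update κ ℓ (κ ℓ - 1)) x)) := by
  rw [sum_fiber_zero_eq_sum_cons hx hℓ, mul_sum]
  refine sum_congr rfl fun ω _ => ?_
  have hsplit : ∑ i : Fin (n + 1), (Fin.cons (x ℓ) ω : Fin (M + 1) → ℝ) (Fin.castLE h i)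
      = x ℓ + ∑ i : Fin n, ω (Fin.castLE hn i) := by
    rw [Fin.sum_univ_succ]
    rfl
  rw [← exp_add, hsplit, mul_assoc, ← mul_add, Nat.cast_succ,
    add_sub_succ_mul_eq hn (natCast_mul_multisliceMean_update hκ hℓ)]

theorem sum_exp_partialSum_le (hx : Injective x) {a b : ℝ} (ha : ∀ ℓ, a ≤ x ℓ)
    (hb : ∀ ℓ, x ℓ ≤ b) {n : ℕ} (h : n ≤ N) (s : ℝ) :
    ∑ ω ∈ multislice L N κ x,
        exp (s * (∑ i : Fin n, ω (Fin.castLE h i) - n * multisliceMean κ x))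
      ≤ #(multislice L N κ x) * exp ((b - a) ^ 2 * (n * (1 - n / N)) / 2 * s ^ 2 / 2) := by
  induction n generalizing N κ with
  | zero => simp
  | succ n ih =>
    obtain ⟨M, rfl⟩ : ∃ M, N = M + 1 := ⟨N - 1, by omega⟩
    have hnM : n ≤ M := by omega
    set Ω := multislice L (M + 1) κ x
    rcases Ω.eq_empty_or_nonempty with hΩ | hΩ
    · simp [hΩ]
    set μ := multisliceMean κ x
    set c : ℝ := (M - n) / M
    set E := exp ((b - a) ^ 2 * (n * (1 - n / M)) / 2 * s ^ 2 / 2)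
    have hκ : ∑ ℓ, (κ ℓ : ℝ) = M + 1 := by
      obtain ⟨ω, hω⟩ := hΩ
      exact_mod_cast sum_eq_of_mem_multislice hx hω
    have hfiber (ℓ : Fin L) :
        ∑ ω ∈ Ω with ω 0 = x ℓ,
            exp (s * (∑ i : Fin (n + 1), ω (Fin.castLE h i) - (n + 1 : ℕ) * μ))
          ≤ exp (s * c * (x ℓ - μ)) * (#{ω ∈ Ω | ω 0 = x ℓ} * E) := by
      rcases (Ω.filter (· 0 = x ℓ)).eq_empty_or_nonempty with he | ⟨ω, hω⟩
      · simp [he]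
      have hℓ := pos_of_mem_multislice_of_apply_eq (mem_filter.mp hω).1 (mem_filter.mp hω).2
      rw [sum_fiber_exp_partialSum_eq hx hnM h hκ hℓ, card_fiber_zero_eq hx hℓ]
      exact mul_le_mul_of_nonneg_left (ih hnM) (exp_nonneg _)
    have hexp : (s * c) ^ 2 * (b - a) ^ 2 / 8 + (b - a) ^ 2 * (n * (1 - n / M)) / 2 * s ^ 2 / 2
        ≤ (b - a) ^ 2 * ((n + 1 : ℕ) * (1 - (n + 1 : ℕ) / (M + 1 : ℕ))) / 2 * s ^ 2 / 2 := by
      have key := mul_le_mul_of_nonneg_left (sq_div_two_add_mul_one_sub_div_le hnM)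
        (by positivity : 0 ≤ (b - a) ^ 2 * s ^ 2 / 4)
      push_cast
      linear_combination key
    calc ∑ ω ∈ Ω, exp (s * (∑ i : Fin (n + 1), ω (Fin.castLE h i) - (n + 1 : ℕ) * μ))
        = ∑ ℓ, ∑ ω ∈ Ω with ω 0 = x ℓ,
            exp (s * (∑ i : Fin (n + 1), ω (Fin.castLE h i) - (n + 1 : ℕ) * μ)) :=
          sum_multislice_eq_sum_fiber hx 0 _
      _ ≤ ∑ ℓ, exp (s * c * (x ℓ - μ)) * (#{ω ∈ Ω | ω 0 = x ℓ} * E) :=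
          sum_le_sum fun ℓ _ => hfiber ℓ
      _ = (∑ ω ∈ Ω, exp (s * c * (ω 0 - μ))) * E := by
          rw [← sum_card_fiber_mul hx 0 fun y => exp (s * c * (y - μ)), sum_mul]
          exact sum_congr rfl fun ℓ _ => by ring
      _ ≤ #Ω * exp ((s * c) ^ 2 * (b - a) ^ 2 / 8) * E := by
          gcongr
          exact sum_exp_mul_apply_sub_multisliceMean_le hx ha hb 0 (s * c)
      _ ≤ _ := by
          rw [mul_assoc, ← exp_add]
          gcongr

end Multislice

/-- Serfling-type inequality for sampling without replacement. -/
theorem stmt6 (L N n : ℕ) (hL : 2 ≤ L) (κ : Fin L → ℕ) (x : Fin L → ℝ) (hx : StrictMono x)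
    (hn : n ≤ N) (hn1 : 1 ≤ n) (t : ℝ) (ht : 0 ≤ t) :
    msProbN L N n κ x hn
        (fun ω => (1 / (n : ℝ)) * ∑ i, ω i -
          msExpectN L N n κ x hn (fun ω => ω ⟨0, by omega⟩) ≥ t) ≤
      Real.exp (-(n * t ^ 2) /
        (4 * (1 - (n : ℝ) / N) * (x ⟨L - 1, by omega⟩ - x ⟨0, by omega⟩) ^ 2)) ∧
    msProbN L N n κ x hn
        (fun ω => (1 / (n : ℝ)) * ∑ i, ω i -
          msExpectN L N n κ x hn (fun ω => ω ⟨0, by omega⟩) ≤ -t) ≤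
      Real.exp (-(n * t ^ 2) /
        (4 * (1 - (n : ℝ) / N) * (x ⟨L - 1, by omega⟩ - x ⟨0, by omega⟩) ^ 2)) := by
  set a := x ⟨0, by omega⟩
  set b := x ⟨L - 1, by omega⟩
  set W : ℝ := 1 - n / N
  rcases (multislice L N κ x).eq_empty_or_nonempty with hΩ | hΩ
  · simp [msProbN, uprob, hΩ, exp_nonneg]
  have hn0 : (0 : ℝ) < n := by exact_mod_cast hn1
  have hW : 0 ≤ W := sub_nonneg.mpr (div_le_one_of_le₀ (by exact_mod_cast hn) (Nat.cast_nonneg _))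
  set μ := multisliceMean κ x
  have hE : msExpectN L N n κ x hn (fun ω => ω ⟨0, by omega⟩) = μ :=
    uexpect_multislice_apply hx.injective hΩ _
  obtain ⟨hup, hlow⟩ := uprob_le_of_sum_exp_le (by positivity)
    (sum_exp_partialSum_le hx.injective (a := a) (b := b) (κ := κ)
      (fun ℓ => hx.monotone (Fin.le_def.mpr (Nat.zero_le _)))
      (fun ℓ => hx.monotone (Fin.le_def.mpr (Nat.le_sub_one_of_lt ℓ.isLt))) hn)
    (by positivity : 0 ≤ n * t)
  have hcenter (A : ℝ) : 1 / (n : ℝ) * A - μ = (A - n * μ) / n := by field_simp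
  constructor
  · calc _ = uprob (multislice L N κ x)
          (fun ω => n * t ≤ ∑ i : Fin n, ω (Fin.castLE hn i) - n * μ) := by
          rw [msProbN, hE]
          simp_rw [hcenter, ge_iff_le, le_div_iff₀ hn0, mul_comm t]
      _ ≤ _ := hup.trans (exp_le_exp.mpr (neg_sq_div_le hn0 hW (sq_nonneg _)))
  · calc _ = uprob (multislice L N κ x)
          (fun ω => ∑ i : Fin n, ω (Fin.castLE hn i) - n * μ ≤ -(n * t)) := by
          rw [msProbN, hE]
          simp_rw [hcenter, div_le_iff₀ hn0, neg_mul, mul_comm t]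
      _ ≤ _ := hlow.trans (exp_le_exp.mpr (neg_sq_div_le hn0 hW (sq_nonneg _)))
end
end

section
/- Define g_{n,t}(ω_1,…,ω_n) = (1/n) Σ_{i=1}^n 1_{(−∞,t]}(ω_i) and f(ω) = sup_{t ∈ ℝ} ( g_{n,t}(ω) − E_{κ,n} g_{n,t} ). Then for every t ≥ 0, P_{κ,n}( √n |f − E_{κ,n} f| ≥ t ) ≤ 2 exp(− t² / (4 (1 − n/N))). -/
open Finset Real
open scoped Classical

noncomputable section

/-! The multislice is the set of arrangements of a fixed multiset `m` of letters, and
`Ω_{κ,n}` is the law of the first `n` letters of a uniform arrangement. Revealing the letters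
one at a time gives a Doob martingale. Conditioned on the first letter being `a`, the remaining
letters are a uniform arrangement of `m.erase a`; exchanging the first letter with a later
occurrence of `b` couples the conditional laws for `a` and `b`. The exchange permutes the
sample if that occurrence lies inside the sample and changes one sample letter otherwise, so
for a symmetric statistic with bounded differences `β` the conditional expectations differ by
at most `β (M - r) / M`. Hoeffding's lemma for each increment bounds the moment generating
function, and Chernoff's bound applied to `± F` gives the two-sided tail. The statistic
`f = sup_t (g_{n,t} - E g_{n,t})` is symmetric with bounded differences `1 / n`. -/

open Function
open scoped BigOperators

variable {α : Type*}

theorem Fin.univ_val_map_cons {M : ℕ} (a : α) (τ : Fin M → α) :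
    univ.val.map (Fin.cons a τ : Fin (M + 1) → α) = a ::ₘ univ.val.map τ := by
  rw [Fin.univ_val_map, Fin.univ_val_map, List.ofFn_succ]
  simp

theorem Fin.take_succ_cons {M r : ℕ} (h : r + 1 ≤ M + 1) (a : α) (τ : Fin M → α) :
    Fin.take (r + 1) h (Fin.cons a τ : Fin (M + 1) → α)
      = Fin.cons a (Fin.take r (Nat.le_of_succ_le_succ h) τ) := by
  ext i
  exact Fin.cases rfl (fun _ => rfl) i

theorem Fin.cons_comp_swap_zero_succ {n : ℕ} (a : α) (ρ : Fin n → α) (j : Fin n) :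
    (Fin.cons a ρ : Fin (n + 1) → α) ∘ Equiv.swap 0 j.succ = Fin.cons (ρ j) (update ρ j a) := by
  ext i
  refine Fin.cases (by simp) (fun k => ?_) i
  rcases eq_or_ne k j with rfl | hk
  · simp
  · simp [Equiv.swap_apply_of_ne_of_ne (Fin.succ_ne_zero k) (Fin.succ_injective _ |>.ne hk), hk]

theorem Fin.sum_ite_le_val (M r : ℕ) (β : ℝ) :
    ∑ j : Fin M, (if r ≤ (j : ℕ) then β else 0) = (M - r : ℕ) * β := by
  rw [Finset.sum_ite, sum_const_zero, add_zero, Finset.sum_const, nsmul_eq_mul]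
  congr
  have := Finset.card_filter_add_card_filter_not (s := univ) (p := fun j : Fin M => (j : ℕ) < r)
  simp only [Fin.card_filter_val_lt, not_lt, card_univ, Fintype.card_fin] at this
  omega

/-! ### Arrangements of a multiset -/

def arrangements (m : Multiset α) (M : ℕ) : Finset (Fin M → α) :=
  (Fintype.piFinset fun _ => m.toFinset).filter fun ω => univ.val.map ω = m

@[simp]
theorem mem_arrangements {m : Multiset α} {M : ℕ} {ω : Fin M → α} :
    ω ∈ arrangements m M ↔ univ.val.map ω = m := by
  refine ⟨fun h => (mem_filter.1 h).2, fun h => mem_filter.2 ⟨?_, h⟩⟩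
  rw [Fintype.mem_piFinset]
  intro i
  simp [← h]

theorem card_eq_of_mem_arrangements {m : Multiset α} {M : ℕ} {ω : Fin M → α}
    (h : ω ∈ arrangements m M) : m.card = M := by
  simp [← mem_arrangements.1 h]

theorem arrangements_nonempty {m : Multiset α} {M : ℕ} (h : m.card = M) :
    (arrangements m M).Nonempty := by
  subst h
  refine ⟨fun i => m.toList.get (i.cast (Multiset.length_toList m).symm), ?_⟩
  rw [mem_arrangements, Fin.univ_val_map]
  conv_rhs => rw [← Multiset.coe_toList m]
  congr 1
  exact List.ext_getElem (by simp) (by simp)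

theorem comp_perm_mem_arrangements {m : Multiset α} {M : ℕ} {ω : Fin M → α}
    (h : ω ∈ arrangements m M) (σ : Equiv.Perm (Fin M)) : ω ∘ σ ∈ arrangements m M := by
  rw [mem_arrangements, ← Multiset.map_map, Multiset.map_univ_val_equiv]
  exact mem_arrangements.1 h

theorem cons_mem_arrangements {m : Multiset α} {M : ℕ} {a : α} {τ : Fin M → α} :
    Fin.cons a τ ∈ arrangements m (M + 1) ↔ a ∈ m ∧ τ ∈ arrangements (m.erase a) M := by
  simp only [mem_arrangements, Fin.univ_val_map_cons]
  constructor
  · rintro rfl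
    simp
  · rintro ⟨ha, h⟩
    rw [h, Multiset.cons_erase ha]

theorem sum_arrangements_succ {β : Type*} [AddCommMonoid β] (m : Multiset α) (M : ℕ)
    (H : (Fin (M + 1) → α) → β) :
    ∑ ω ∈ arrangements m (M + 1), H ω
      = ∑ a ∈ m.toFinset, ∑ τ ∈ arrangements (m.erase a) M, H (Fin.cons a τ) := by
  rw [Finset.sum_sigma']
  refine Finset.sum_nbij' (fun ω => ⟨ω 0, Fin.tail ω⟩) (fun p => Fin.cons p.1 p.2) ?_ ?_ ?_ ?_ ?_
  · intro ω hω
    rw [← Fin.cons_self_tail ω, cons_mem_arrangements] at hω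
    simpa using hω
  · rintro ⟨a, τ⟩ h
    simp only [mem_sigma, Multiset.mem_toFinset] at h
    exact cons_mem_arrangements.2 h
  · intro ω _
    exact Fin.cons_self_tail ω
  · rintro ⟨a, τ⟩ _
    simp
  · intro ω _
    rw [Fin.cons_self_tail]

theorem card_filter_apply_eq_count {M : ℕ} (τ : Fin M → α) (b : α) :
    #{j | τ j = b} = (univ.val.map τ).count b := by
  rw [Multiset.count_map, Finset.card_def, Finset.filter_val]
  simp only [eq_comm]

theorem card_filter_apply_eq_of_comp_perm_mem {M : ℕ} {A : Finset (Fin M → α)}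
    (hA : ∀ ω ∈ A, ∀ σ : Equiv.Perm (Fin M), ω ∘ σ ∈ A) (b : α) (j j' : Fin M) :
    #{ω ∈ A | ω j = b} = #{ω ∈ A | ω j' = b} := by
  refine Finset.card_nbij' (· ∘ Equiv.swap j j') (· ∘ Equiv.swap j j') ?_ ?_ ?_ ?_ <;>
    intro ω hω <;> rw [Finset.mem_coe, mem_filter] at hω
  iterate 2 exact mem_filter.2 ⟨hA ω hω.1 _, by simpa using hω.2⟩
  iterate 2 ext; simp

theorem sum_sum_filter_apply_arrangements (m : Multiset α) (M : ℕ) (b : α)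
    (h : (Fin M → α) → ℝ) :
    ∑ j, ∑ τ ∈ arrangements m M with τ j = b, h τ = m.count b * ∑ τ ∈ arrangements m M, h τ := by
  simp_rw [Finset.sum_filter]
  rw [Finset.sum_comm, Finset.mul_sum]
  refine Finset.sum_congr rfl fun τ hτ => ?_
  rw [← Finset.sum_filter, Finset.sum_const, nsmul_eq_mul, card_filter_apply_eq_count,
    mem_arrangements.1 hτ]

theorem card_mul_expect_arrangements {m : Multiset α} {M : ℕ} {b : α} (hb : b ∈ m)
    (hm : m.card = M) (h : (Fin M → α) → ℝ) :
    (M : ℝ) * 𝔼 τ ∈ arrangements m M, h τ = ∑ j, 𝔼 τ ∈ arrangements m M with τ j = b, h τ := by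
  have hM : 0 < M := hm ▸ Multiset.card_pos_iff_exists_mem.2 ⟨b, hb⟩
  obtain ⟨K, hK⟩ : ∃ K, ∀ j, #{τ ∈ arrangements m M | τ j = b} = K := ⟨_, fun j =>
    card_filter_apply_eq_of_comp_perm_mem (fun _ hω σ => comp_perm_mem_arrangements hω σ) b j
      ⟨0, hM⟩⟩
  have hMK : (M : ℝ) * K = m.count b * #(arrangements m M) := by
    simpa [hK] using sum_sum_filter_apply_arrangements m M b fun _ => 1
  have hc : (m.count b : ℝ) ≠ 0 := by exact_mod_cast (Multiset.count_pos.2 hb).ne'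
  have hA : (#(arrangements m M) : ℝ) ≠ 0 := by
    exact_mod_cast (arrangements_nonempty hm).card_ne_zero
  have hK0 : (K : ℝ) ≠ 0 := by
    intro h0
    rw [h0, mul_zero] at hMK
    exact mul_ne_zero hc hA hMK.symm
  simp_rw [Finset.expect_eq_sum_div_card, hK, ← Finset.sum_div,
    sum_sum_filter_apply_arrangements]
  field_simp
  linear_combination (∑ τ ∈ arrangements m M, h τ) * hMK

theorem update_mem_arrangements_erase {m : Multiset α} {M : ℕ} {a : α} {τ : Fin M → α}
    (ha : a ∈ m) (hτ : τ ∈ arrangements (m.erase a) M) (j : Fin M) :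
    update τ j a ∈ arrangements (m.erase (τ j)) M := by
  have h := comp_perm_mem_arrangements (cons_mem_arrangements.2 ⟨ha, hτ⟩) (Equiv.swap 0 j.succ)
  rw [Fin.cons_comp_swap_zero_succ] at h
  exact (cons_mem_arrangements.1 h).2

theorem expect_filter_apply_arrangements_erase {m : Multiset α} {M : ℕ} {a b : α}
    (ha : a ∈ m) (hb : b ∈ m) (j : Fin M) (h : (Fin M → α) → ℝ) :
    𝔼 τ ∈ arrangements (m.erase b) M with τ j = a, h τ
      = 𝔼 τ ∈ arrangements (m.erase a) M with τ j = b, h (update τ j a) := by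
  refine Finset.expect_nbij' (update · j b) (update · j a) ?_ ?_ ?_ ?_ ?_ <;>
    intro τ hτ <;> rw [mem_filter] at hτ
  · exact mem_filter.2 ⟨by simpa [hτ.2] using update_mem_arrangements_erase hb hτ.1 j,
      update_self ..⟩
  · exact mem_filter.2 ⟨by simpa [hτ.2] using update_mem_arrangements_erase ha hτ.1 j,
      update_self ..⟩
  all_goals rw [update_idem, ← hτ.2, update_eq_self]

theorem expect_arrangements_succ (m : Multiset α) (M : ℕ) (H : (Fin (M + 1) → α) → ℝ) :
    𝔼 ω ∈ arrangements m (M + 1), H ω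
      = ∑ a ∈ m.toFinset, (#(arrangements (m.erase a) M) / #(arrangements m (M + 1)) : ℝ)
          * 𝔼 τ ∈ arrangements (m.erase a) M, H (Fin.cons a τ) := by
  rw [expect_eq_sum_div_card, sum_arrangements_succ, sum_div]
  refine sum_congr rfl fun a _ => ?_
  rw [div_mul_eq_mul_div, card_mul_expect]

theorem sum_card_arrangements_erase_div {m : Multiset α} {M : ℕ}
    (h : (arrangements m (M + 1)).Nonempty) :
    ∑ a ∈ m.toFinset, (#(arrangements (m.erase a) M) / #(arrangements m (M + 1)) : ℝ) = 1 := by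
  have hcard := sum_arrangements_succ m M fun _ => (1 : ℝ)
  simp only [sum_const, nsmul_eq_mul, mul_one] at hcard
  rw [← sum_div, ← hcard, div_self (by exact_mod_cast h.card_ne_zero)]

/-! ### Symmetric statistics with bounded differences -/

def IsSymmetric {r : ℕ} (F : (Fin r → α) → ℝ) : Prop :=
  ∀ (ρ : Fin r → α) (σ : Equiv.Perm (Fin r)), F (ρ ∘ σ) = F ρ

def HasBoundedDifferences {r : ℕ} (β : ℝ) (F : (Fin r → α) → ℝ) : Prop :=
  ∀ (ρ : Fin r → α) (i : Fin r) (v : α), |F ρ - F (update ρ i v)| ≤ β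

theorem IsSymmetric.comp_cons {r : ℕ} {F : (Fin (r + 1) → α) → ℝ} (hF : IsSymmetric F)
    (a : α) : IsSymmetric fun ρ : Fin r → α => F (Fin.cons a ρ) := by
  intro ρ σ
  have : (Fin.cons a (ρ ∘ σ) : Fin (r + 1) → α)
      = Fin.cons a ρ ∘ Equiv.Perm.decomposeFin.symm (0, σ) := by
    ext i
    refine Fin.cases ?_ (fun k => ?_) i
    · simp
    · simp [Equiv.Perm.decomposeFin_symm_apply_succ]
  simp only [this]
  exact hF _ _

theorem HasBoundedDifferences.comp_cons {r : ℕ} {β : ℝ} {F : (Fin (r + 1) → α) → ℝ}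
    (hF : HasBoundedDifferences β F) (a : α) :
    HasBoundedDifferences β fun ρ : Fin r → α => F (Fin.cons a ρ) := by
  intro ρ i v
  simpa only [Fin.cons_update] using hF (Fin.cons a ρ) i.succ v

theorem HasBoundedDifferences.nonneg {r : ℕ} {β : ℝ} {F : (Fin (r + 1) → α) → ℝ}
    (hF : HasBoundedDifferences β F) (ρ : Fin (r + 1) → α) : 0 ≤ β := by
  simpa using hF ρ 0 (ρ 0)

theorem abs_sub_cons_take_update_le {r M : ℕ} {β : ℝ} {F : (Fin (r + 1) → α) → ℝ}
    (hsym : IsSymmetric F) (hbd : HasBoundedDifferences β F) (hr : r ≤ M) (a : α)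
    (τ : Fin M → α) (j : Fin M) :
    |F (Fin.cons a (Fin.take r hr τ)) - F (Fin.cons (τ j) (Fin.take r hr (update τ j a)))|
      ≤ if r ≤ (j : ℕ) then β else 0 := by
  split_ifs with hj
  · rw [Fin.take_update_of_ge r hr τ j hj]
    simpa only [Fin.update_cons_zero] using hbd (Fin.cons a (Fin.take r hr τ)) 0 (τ j)
  · obtain ⟨j', rfl⟩ : ∃ j' : Fin r, Fin.castLE hr j' = j := ⟨⟨j, by omega⟩, rfl⟩
    rw [Fin.take_update_of_lt, show τ (Fin.castLE hr j') = Fin.take r hr τ j' from rfl,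
      ← Fin.cons_comp_swap_zero_succ, hsym, sub_self, abs_zero]

theorem Finset.abs_expect_le_of_forall {ι : Type*} {s : Finset ι} {f : ι → ℝ} {c : ℝ}
    (hc : 0 ≤ c) (h : ∀ i ∈ s, |f i| ≤ c) : |𝔼 i ∈ s, f i| ≤ c := by
  refine (abs_expect_le s f).trans ?_
  rcases s.eq_empty_or_nonempty with rfl | hs
  · simpa using hc
  · exact expect_le hs h

theorem abs_expect_cons_sub_expect_cons_le {r M : ℕ} {β : ℝ} {F : (Fin (r + 1) → α) → ℝ}
    (hsym : IsSymmetric F) (hbd : HasBoundedDifferences β F) (hr : r ≤ M) {m : Multiset α}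
    (hm : m.card = M + 1) {a b : α} (ha : a ∈ m) (hb : b ∈ m) :
    |𝔼 τ ∈ arrangements (m.erase a) M, F (Fin.cons a (Fin.take r hr τ))
      - 𝔼 τ ∈ arrangements (m.erase b) M, F (Fin.cons b (Fin.take r hr τ))|
      ≤ β * (M - r) / M := by
  have hβ : 0 ≤ β := hbd.nonneg (Fin.cons a fun _ => a)
  rcases eq_or_ne a b with rfl | hab
  · rw [sub_self, abs_zero]
    have hrM : (r : ℝ) ≤ M := by exact_mod_cast hr
    exact div_nonneg (mul_nonneg hβ (sub_nonneg.2 hrM)) (Nat.cast_nonneg M)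
  have hbA : b ∈ m.erase a := (Multiset.mem_erase_of_ne hab.symm).2 hb
  have haB : a ∈ m.erase b := (Multiset.mem_erase_of_ne hab).2 ha
  have hcard : ∀ c ∈ m, (m.erase c).card = M := fun c hc => by
    simp [Multiset.card_erase_of_mem hc, hm]
  have hM : (0 : ℝ) < M := by
    exact_mod_cast hcard a ha ▸ Multiset.card_pos_iff_exists_mem.2 ⟨b, hbA⟩
  have hsplit : (M : ℝ) * (𝔼 τ ∈ arrangements (m.erase a) M, F (Fin.cons a (Fin.take r hr τ))
      - 𝔼 τ ∈ arrangements (m.erase b) M, F (Fin.cons b (Fin.take r hr τ)))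
      = ∑ j, 𝔼 τ ∈ arrangements (m.erase a) M with τ j = b,
          (F (Fin.cons a (Fin.take r hr τ))
            - F (Fin.cons (τ j) (Fin.take r hr (update τ j a)))) := by
    rw [mul_sub, card_mul_expect_arrangements hbA (hcard a ha),
      card_mul_expect_arrangements haB (hcard b hb), ← sum_sub_distrib]
    refine sum_congr rfl fun j _ => ?_
    rw [expect_filter_apply_arrangements_erase ha hb, ← expect_sub_distrib]
    refine expect_congr rfl fun τ hτ => ?_
    rw [(mem_filter.1 hτ).2]
  have hterm : ∀ j : Fin M, |𝔼 τ ∈ arrangements (m.erase a) M with τ j = b,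
      (F (Fin.cons a (Fin.take r hr τ)) - F (Fin.cons (τ j) (Fin.take r hr (update τ j a))))|
      ≤ if r ≤ (j : ℕ) then β else 0 := fun j =>
    abs_expect_le_of_forall (by split_ifs <;> simp [hβ]) fun τ _ =>
      abs_sub_cons_take_update_le hsym hbd hr a τ j
  rw [le_div_iff₀ hM, mul_comm, ← abs_of_pos hM, ← abs_mul, abs_of_pos hM, hsplit]
  calc _ ≤ ∑ j : Fin M, (if r ≤ (j : ℕ) then β else 0) :=
        (abs_sum_le_sum_abs _ _).trans (sum_le_sum fun j _ => hterm j)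
    _ = β * (M - r) := by rw [Fin.sum_ite_le_val, Nat.cast_sub hr, mul_comm]

/-! ### Hoeffding's lemma and the moment generating function -/

theorem exp_mul_le_cosh_add_div_mul_sinh {c d : ℝ} (hd : |d| ≤ c) (θ : ℝ) :
    exp (θ * d) ≤ cosh (θ * c) + d / c * sinh (θ * c) := by
  rcases ((abs_nonneg d).trans hd).eq_or_lt with rfl | hc
  · simp [abs_nonpos_iff.1 hd]
  obtain ⟨h₁, h₂⟩ := abs_le.1 hd
  -- `θ * d` is the convex combination of `∓ θ * c` with weights `(c ∓ d) / (2 * c)`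
  have key := convexOn_exp.2 (Set.mem_univ (-(θ * c))) (Set.mem_univ (θ * c))
    (div_nonneg (sub_nonneg.2 h₂) (by positivity) : 0 ≤ (c - d) / (2 * c))
    (div_nonneg (by linarith) (by positivity) : 0 ≤ (c + d) / (2 * c)) (by field_simp; ring)
  have harg : ((c - d) / (2 * c)) • -(θ * c) + ((c + d) / (2 * c)) • (θ * c) = θ * d := by
    rw [smul_eq_mul, smul_eq_mul]
    field_simp
    ring
  have hval : ((c - d) / (2 * c)) • exp (-(θ * c)) + ((c + d) / (2 * c)) • exp (θ * c)
      = cosh (θ * c) + d / c * sinh (θ * c) := by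
    rw [cosh_eq, sinh_eq, smul_eq_mul, smul_eq_mul]
    field_simp
    ring
  rwa [harg, hval] at key

theorem sum_mul_exp_le_exp_sq {ι : Type*} {s : Finset ι} {w d : ι → ℝ} {c : ℝ}
    (hw : ∀ i ∈ s, 0 ≤ w i) (hw1 : ∑ i ∈ s, w i = 1) (hwd : ∑ i ∈ s, w i * d i = 0)
    (hd : ∀ i ∈ s, |d i| ≤ c) (θ : ℝ) :
    ∑ i ∈ s, w i * exp (θ * d i) ≤ exp (θ ^ 2 * c ^ 2 / 2) :=
  calc ∑ i ∈ s, w i * exp (θ * d i)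
      ≤ ∑ i ∈ s, w i * (cosh (θ * c) + d i / c * sinh (θ * c)) :=
        sum_le_sum fun i hi =>
          mul_le_mul_of_nonneg_left (exp_mul_le_cosh_add_div_mul_sinh (hd i hi) θ) (hw i hi)
    _ = cosh (θ * c) * ∑ i ∈ s, w i + sinh (θ * c) / c * ∑ i ∈ s, w i * d i := by
        rw [mul_sum, mul_sum, ← sum_add_distrib]
        exact sum_congr rfl fun i _ => by ring
    _ = cosh (θ * c) := by rw [hw1, hwd, mul_one, mul_zero, add_zero]
    _ ≤ exp (θ ^ 2 * c ^ 2 / 2) := by rw [← mul_pow]; exact cosh_le_exp_half_sq _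

theorem abs_sub_sum_mul_le {ι : Type*} {s : Finset ι} {w E : ι → ℝ} {c : ℝ}
    (hw : ∀ i ∈ s, 0 ≤ w i) (hw1 : ∑ i ∈ s, w i = 1) {a : ι}
    (hE : ∀ b ∈ s, |E a - E b| ≤ c) : |E a - ∑ b ∈ s, w b * E b| ≤ c := by
  have : E a - ∑ b ∈ s, w b * E b = ∑ b ∈ s, w b * (E a - E b) := by
    simp only [mul_sub, sum_sub_distrib, ← sum_mul, hw1, one_mul]
  rw [this]
  calc _ ≤ ∑ b ∈ s, w b * c := (abs_sum_le_sum_abs _ _).trans <| sum_le_sum fun b hb => by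
        rw [abs_mul, abs_of_nonneg (hw b hb)]
        exact mul_le_mul_of_nonneg_left (hE b hb) (hw b hb)
    _ = c := by rw [← sum_mul, hw1, one_mul]

-- The `k`-th term is the square of `(M - r) / (M - r + k)`, the relative size of the
-- martingale increment at the step after which `k` letters of the sample are still unrevealed.
def samplingVarianceFactor (M r : ℕ) : ℝ := ∑ k ∈ range r, (((M : ℝ) - r) / (M - r + k)) ^ 2

theorem samplingVarianceFactor_succ (M r : ℕ) :
    samplingVarianceFactor (M + 1) (r + 1)
      = samplingVarianceFactor M r + ((M - r) / M : ℝ) ^ 2 := by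
  have : ((M + 1 : ℕ) : ℝ) - (r + 1 : ℕ) = M - r := by push_cast; ring
  rw [samplingVarianceFactor, this, sum_range_succ, sub_add_cancel]
  rfl

theorem sum_range_sq_div_add_le (m r : ℕ) :
    ∑ k ∈ range r, ((m : ℝ) / (m + k)) ^ 2 ≤ 2 * m * r / (m + r) := by
  rcases Nat.eq_zero_or_pos m with rfl | hm
  · simp
  induction r with
  | zero => simp
  | succ r ih =>
    rw [sum_range_succ]
    refine (add_le_add_left ih _).trans ?_
    have hm' : (1 : ℝ) ≤ m := by exact_mod_cast hm
    have hs : (0 : ℝ) < m + r := by positivity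
    rw [div_pow, div_add_div _ _ hs.ne' (by positivity), div_le_div_iff₀ (by positivity)
      (by positivity)]
    push_cast
    nlinarith [mul_nonneg (mul_nonneg (sq_nonneg (m : ℝ)) hs.le)
      (by linarith : (0 : ℝ) ≤ m + r - 1)]

theorem samplingVarianceFactor_le {M r : ℕ} (hr : r ≤ M) :
    samplingVarianceFactor M r ≤ 2 * r * (1 - r / M) := by
  obtain ⟨m, rfl⟩ := Nat.exists_eq_add_of_le' hr
  have h := sum_range_sq_div_add_le m r
  simp only [samplingVarianceFactor, Nat.cast_add, add_sub_cancel_right]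
  rcases Nat.eq_zero_or_pos (m + r) with h0 | hpos
  · obtain ⟨rfl, rfl⟩ : m = 0 ∧ r = 0 := by omega
    simp
  refine h.trans_eq ?_
  have : (0 : ℝ) < m + r := by exact_mod_cast hpos
  field_simp
  ring

theorem expect_exp_mul_sub_expect_arrangements_succ_le {m : Multiset α} {M : ℕ}
    (hm : m.card = M + 1) (H : (Fin (M + 1) → α) → ℝ) {c R : ℝ} (θ : ℝ)
    (hdev : ∀ a ∈ m, ∀ b ∈ m, |𝔼 τ ∈ arrangements (m.erase a) M, H (Fin.cons a τ)
      - 𝔼 τ ∈ arrangements (m.erase b) M, H (Fin.cons b τ)| ≤ c)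
    (hcond : ∀ a ∈ m, 𝔼 τ ∈ arrangements (m.erase a) M,
      exp (θ * (H (Fin.cons a τ) - 𝔼 τ' ∈ arrangements (m.erase a) M, H (Fin.cons a τ'))) ≤ R) :
    𝔼 ω ∈ arrangements m (M + 1), exp (θ * (H ω - 𝔼 ω' ∈ arrangements m (M + 1), H ω'))
      ≤ exp (θ ^ 2 * c ^ 2 / 2) * R := by
  set w : α → ℝ := fun a => #(arrangements (m.erase a) M) / #(arrangements m (M + 1))
  set E : α → ℝ := fun a => 𝔼 τ ∈ arrangements (m.erase a) M, H (Fin.cons a τ)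
  have hw0 : ∀ a ∈ m.toFinset, 0 ≤ w a := fun a _ => by positivity
  have hw1 : ∑ a ∈ m.toFinset, w a = 1 :=
    sum_card_arrangements_erase_div (arrangements_nonempty hm)
  have hR : 0 ≤ R := by
    obtain ⟨a, ha⟩ := Multiset.card_pos_iff_exists_mem.1 (by omega : 0 < m.card)
    exact (expect_nonneg fun τ _ => (exp_pos _).le).trans (hcond a ha)
  rw [expect_arrangements_succ m M H]
  set EF := ∑ b ∈ m.toFinset, w b * E b
  have hmean : ∑ a ∈ m.toFinset, w a * (E a - EF) = 0 := by
    simp only [EF, mul_sub, sum_sub_distrib, ← sum_mul, hw1, one_mul, sub_self]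
  have hdev' : ∀ a ∈ m.toFinset, |E a - EF| ≤ c := fun a ha =>
    abs_sub_sum_mul_le hw0 hw1 fun b hb =>
      hdev a (Multiset.mem_toFinset.1 ha) b (Multiset.mem_toFinset.1 hb)
  rw [expect_arrangements_succ]
  calc ∑ a ∈ m.toFinset, w a * 𝔼 τ ∈ arrangements (m.erase a) M,
          exp (θ * (H (Fin.cons a τ) - EF))
      = ∑ a ∈ m.toFinset, w a * exp (θ * (E a - EF)) * 𝔼 τ ∈ arrangements (m.erase a) M,
          exp (θ * (H (Fin.cons a τ) - E a)) := by
        refine sum_congr rfl fun a _ => ?_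
        rw [mul_assoc]
        refine congrArg (w a * ·) ?_
        rw [mul_expect]
        refine expect_congr rfl fun τ _ => ?_
        rw [← exp_add]
        ring_nf
    _ ≤ ∑ a ∈ m.toFinset, w a * exp (θ * (E a - EF)) * R :=
        sum_le_sum fun a ha => mul_le_mul_of_nonneg_left (hcond a (Multiset.mem_toFinset.1 ha))
          (mul_nonneg (hw0 a ha) (exp_pos _).le)
    _ = (∑ a ∈ m.toFinset, w a * exp (θ * (E a - EF))) * R := by rw [sum_mul]
    _ ≤ exp (θ ^ 2 * c ^ 2 / 2) * R :=
        mul_le_mul_of_nonneg_right (sum_mul_exp_le_exp_sq hw0 hw1 hmean hdev' θ) hR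

theorem expect_exp_mul_sub_expect_le {β : ℝ} (θ : ℝ) {r M : ℕ} (hr : r ≤ M) (m : Multiset α)
    {F : (Fin r → α) → ℝ} (hsym : IsSymmetric F) (hbd : HasBoundedDifferences β F) :
    𝔼 ω ∈ arrangements m M,
        exp (θ * (F (Fin.take r hr ω) - 𝔼 ω' ∈ arrangements m M, F (Fin.take r hr ω')))
      ≤ exp (θ ^ 2 * β ^ 2 * samplingVarianceFactor M r / 2) := by
  induction r generalizing M m with
  | zero =>
    rcases (arrangements m M).eq_empty_or_nonempty with hS | hS
    · simp only [hS, expect_empty]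
      positivity
    simp [expect_const hS, samplingVarianceFactor]
  | succ r ih =>
    obtain _ | M := M
    · omega
    have hr' : r ≤ M := Nat.le_of_succ_le_succ hr
    rcases (arrangements m (M + 1)).eq_empty_or_nonempty with hS | hS
    · simp only [hS, expect_empty]
      positivity
    have hm := card_eq_of_mem_arrangements hS.choose_spec
    refine (expect_exp_mul_sub_expect_arrangements_succ_le hm _ θ (c := β * (M - r) / M)
      (R := exp (θ ^ 2 * β ^ 2 * samplingVarianceFactor M r / 2))
      (fun a ha b hb => ?_) fun a _ => ?_).trans_eq ?_
    · simp only [Fin.take_succ_cons]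
      exact abs_expect_cons_sub_expect_cons_le hsym hbd hr' hm ha hb
    · simp only [Fin.take_succ_cons]
      exact ih hr' (m.erase a) (hsym.comp_cons a) (hbd.comp_cons a)
    · rw [← exp_add, samplingVarianceFactor_succ]
      ring_nf

/-! ### Tail bounds -/

theorem uexpect_eq_expect {ι : Type*} (Ω : Finset ι) (f : ι → ℝ) :
    uexpect Ω f = 𝔼 ω ∈ Ω, f ω :=
  (expect_eq_sum_div_card Ω f).symm

theorem uprob_eq_expect_indicator {ι : Type*} (Ω : Finset ι) (p : ι → Prop) :
    uprob Ω p = 𝔼 ω ∈ Ω, if p ω then (1 : ℝ) else 0 := by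
  rw [uprob, expect_eq_sum_div_card, sum_boole]

theorem uprob_le_uprob_add_uprob {ι : Type*} (Ω : Finset ι) {p q r : ι → Prop}
    (h : ∀ ω, p ω → q ω ∨ r ω) : uprob Ω p ≤ uprob Ω q + uprob Ω r := by
  simp only [uprob_eq_expect_indicator, ← expect_add_distrib]
  refine expect_le_expect fun ω _ => ?_
  by_cases hp : p ω
  · rcases h ω hp with h' | h' <;> simp [hp, h', ite_nonneg]
  · simp [hp, ite_nonneg, add_nonneg]

theorem uprob_le_exp_mul_expect {ι : Type*} (Ω : Finset ι) (Y : ι → ℝ) (u : ℝ) {θ : ℝ}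
    (hθ : 0 ≤ θ) : uprob Ω (fun ω => u ≤ Y ω) ≤ exp (-(θ * u)) * 𝔼 ω ∈ Ω, exp (θ * Y ω) := by
  rw [uprob_eq_expect_indicator, mul_expect]
  refine expect_le_expect fun ω _ => ?_
  rw [← exp_add]
  split_ifs with h
  · exact one_le_exp (by nlinarith)
  · positivity

theorem uprob_le_two_mul_exp_of_mgf_le {ι : Type*} (Ω : Finset ι) (X : ι → ℝ) {V : ℝ}
    (hV : 0 ≤ V)
    (hmgf : ∀ θ : ℝ, 𝔼 ω ∈ Ω, exp (θ * (X ω - 𝔼 ω' ∈ Ω, X ω')) ≤ exp (θ ^ 2 * V / 2))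
    {u : ℝ} (hu : 0 ≤ u) :
    uprob Ω (fun ω => u ≤ |X ω - 𝔼 ω' ∈ Ω, X ω'|) ≤ 2 * exp (-u ^ 2 / (2 * V)) := by
  have hexp : (u / V) ^ 2 * V / 2 - u / V * u = -u ^ 2 / (2 * V) := by
    rcases hV.eq_or_lt with rfl | hV
    · simp
    · field_simp
      ring
  -- Chernoff's bound at `θ = ± u / V`, the minimiser of `θ ^ 2 * V / 2 - θ * u`
  have tail : ∀ s : ℝ, s ^ 2 = 1 →
      uprob Ω (fun ω => u ≤ s * (X ω - 𝔼 ω' ∈ Ω, X ω')) ≤ exp (-u ^ 2 / (2 * V)) := by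
    intro s hs
    refine (uprob_le_exp_mul_expect Ω _ u (div_nonneg hu hV)).trans ?_
    simp_rw [← mul_assoc]
    calc exp (-(u / V * u)) * 𝔼 ω ∈ Ω, exp (u / V * s * (X ω - 𝔼 ω' ∈ Ω, X ω'))
        ≤ exp (-(u / V * u)) * exp ((u / V * s) ^ 2 * V / 2) :=
          mul_le_mul_of_nonneg_left (hmgf _) (exp_pos _).le
      _ = exp (-u ^ 2 / (2 * V)) := by
          rw [← exp_add, ← hexp, mul_pow, hs]
          ring_nf
  refine (uprob_le_uprob_add_uprob Ω fun ω h => ?_).trans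
    ((add_le_add (tail 1 (one_pow 2)) (tail (-1) (by norm_num))).trans_eq (two_mul _).symm)
  simpa only [one_mul, neg_one_mul] using le_abs.1 h

theorem uprob_le_abs_sub_expect_le {β : ℝ} {r M : ℕ} (hr : r ≤ M) (m : Multiset α)
    {F : (Fin r → α) → ℝ} (hsym : IsSymmetric F) (hbd : HasBoundedDifferences β F) {u : ℝ}
    (hu : 0 ≤ u) :
    uprob (arrangements m M)
        (fun ω => u ≤ |F (Fin.take r hr ω) - 𝔼 ω' ∈ arrangements m M, F (Fin.take r hr ω')|)
      ≤ 2 * exp (-u ^ 2 / (4 * β ^ 2 * r * (1 - r / M))) := by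
  have hrM : (r : ℝ) / M ≤ 1 := by
    rcases Nat.eq_zero_or_pos M with rfl | hM
    · simp
    · exact (div_le_one (by exact_mod_cast hM)).2 (by exact_mod_cast hr)
  have hV : 0 ≤ β ^ 2 * (2 * r * (1 - r / M)) := by
    have : (0 : ℝ) ≤ 1 - r / M := by linarith
    positivity
  convert uprob_le_two_mul_exp_of_mgf_le _ _ hV (fun θ => ?_) hu using 4
  · ring
  refine (expect_exp_mul_sub_expect_le θ hr m hsym hbd).trans (exp_le_exp.2 ?_)
  have := samplingVarianceFactor_le hr
  rw [mul_assoc (θ ^ 2)]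
  gcongr

/-! ### The Kolmogorov–Smirnov statistic on the multislice -/

theorem abs_ciSup_sub_ciSup_le {ι : Type*} [Nonempty ι] {f g : ι → ℝ} {c : ℝ}
    (h : ∀ i, |f i - g i| ≤ c) : |(⨆ i, f i) - ⨆ i, g i| ≤ c := by
  have hbdd : ∀ {f g : ι → ℝ}, (∀ i, |f i - g i| ≤ c) → BddAbove (Set.range g) →
      BddAbove (Set.range f) ∧ ⨆ i, f i ≤ (⨆ i, g i) + c := fun {f g} h hg => by
    have hle : ∀ i, f i ≤ (⨆ i, g i) + c := fun i => by
      linarith [le_ciSup hg i, (abs_le.1 (h i)).2]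
    exact ⟨⟨_, Set.forall_mem_range.2 hle⟩, ciSup_le hle⟩
  have h' : ∀ i, |g i - f i| ≤ c := fun i => abs_sub_comm (f i) (g i) ▸ h i
  by_cases hg : BddAbove (Set.range g)
  · obtain ⟨hf, hfg⟩ := hbdd h hg
    exact abs_le.2 ⟨by linarith [(hbdd h' hf).2], by linarith⟩
  · have hf : ¬BddAbove (Set.range f) := fun hf => hg (hbdd h' hf).1
    rw [Real.iSup_of_not_bddAbove hf, Real.iSup_of_not_bddAbove hg, sub_zero, abs_zero]
    exact (abs_nonneg _).trans (h (Classical.arbitrary ι))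

theorem IsSymmetric.iSup_sub {ι : Type*} {r : ℕ} {G : ι → (Fin r → α) → ℝ}
    (hG : ∀ i, IsSymmetric (G i)) (C : ι → ℝ) : IsSymmetric fun ρ => ⨆ i, (G i ρ - C i) :=
  fun ρ σ => by simp only [hG _ ρ σ]

theorem HasBoundedDifferences.iSup_sub {ι : Type*} [Nonempty ι] {r : ℕ} {β : ℝ}
    {G : ι → (Fin r → α) → ℝ} (hG : ∀ i, HasBoundedDifferences β (G i)) (C : ι → ℝ) :
    HasBoundedDifferences β fun ρ => ⨆ i, (G i ρ - C i) :=
  fun ρ j v => abs_ciSup_sub_ciSup_le fun i => by simpa using hG i ρ j v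

def empiricalCDF {n : ℕ} (s : ℝ) (ω : Fin n → ℝ) : ℝ :=
  (1 / (n : ℝ)) * ∑ i, if ω i ≤ s then 1 else 0

theorem isSymmetric_empiricalCDF (n : ℕ) (s : ℝ) : IsSymmetric (empiricalCDF (n := n) s) :=
  fun ρ σ => by
    simp only [empiricalCDF, Function.comp_apply]
    rw [Equiv.sum_comp σ fun i => if ρ i ≤ s then (1 : ℝ) else 0]

theorem hasBoundedDifferences_empiricalCDF (n : ℕ) (s : ℝ) :
    HasBoundedDifferences (1 / n) (empiricalCDF (n := n) s) := by
  intro ρ i v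
  rw [empiricalCDF, empiricalCDF, ← mul_sub, ← sum_sub_distrib, sum_eq_single i
    (fun j _ hj => by rw [update_of_ne hj, sub_self]) (by simp), update_self, abs_mul,
    abs_of_nonneg (by positivity)]
  refine mul_le_of_le_one_right (by positivity) ?_
  split_ifs <;> norm_num

theorem mem_multislice_iff {L N : ℕ} {κ : Fin L → ℕ} {x : Fin L → ℝ} {ω : Fin N → ℝ} :
    ω ∈ multislice L N κ x ↔ (∀ i, ∃ ℓ, x ℓ = ω i) ∧ ∀ ℓ, #{i | ω i = x ℓ} = κ ℓ := by
  simp [multislice, Fintype.mem_piFinset]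

theorem multislice_eq_arrangements {L N : ℕ} {κ : Fin L → ℕ} {x : Fin L → ℝ} {ω₀ : Fin N → ℝ}
    (h₀ : ω₀ ∈ multislice L N κ x) :
    multislice L N κ x = arrangements (univ.val.map ω₀) N := by
  ext ω
  rw [mem_arrangements]
  constructor
  · intro hω
    rw [mem_multislice_iff] at hω h₀
    ext y
    rw [← card_filter_apply_eq_count, ← card_filter_apply_eq_count]
    by_cases hy : ∃ ℓ, x ℓ = y
    · obtain ⟨ℓ, rfl⟩ := hy
      convert (hω.2 ℓ).trans (h₀.2 ℓ).symm
    · have hnone : ∀ ω' : Fin N → ℝ, (∀ i, ∃ ℓ, x ℓ = ω' i) → #{i | ω' i = y} = 0 :=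
        fun ω' hω' => card_eq_zero.2 <| filter_eq_empty_iff.2 fun i _ hi => by
          obtain ⟨ℓ, hℓ⟩ := hω' i
          exact hy ⟨ℓ, hℓ.trans hi⟩
      rw [hnone ω hω.1, hnone ω₀ h₀.1]
  · intro h
    rw [mem_multislice_iff] at h₀ ⊢
    refine ⟨fun i => ?_, fun ℓ => ?_⟩
    · obtain ⟨k, -, hk⟩ := Multiset.mem_map.1 (h ▸ Multiset.mem_map_of_mem ω (mem_univ i))
      obtain ⟨ℓ, hℓ⟩ := h₀.1 k
      exact ⟨ℓ, hℓ.trans hk⟩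
    · convert h₀.2 ℓ using 1
      convert congrArg (Multiset.count (x ℓ)) h using 1 <;> exact card_filter_apply_eq_count _ _

theorem exists_multislice_eq_arrangements (L N : ℕ) (κ : Fin L → ℕ) (x : Fin L → ℝ) :
    ∃ m, multislice L N κ x = arrangements m N := by
  rcases (multislice L N κ x).eq_empty_or_nonempty with h | ⟨ω₀, h₀⟩
  · refine ⟨Multiset.replicate (N + 1) 0, h.trans (eq_empty_of_forall_notMem fun ω hω => ?_).symm⟩
    simpa using card_eq_of_mem_arrangements hω
  · exact ⟨_, multislice_eq_arrangements h₀⟩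

theorem stmt7_general (L N n : ℕ) (κ : Fin L → ℕ) (x : Fin L → ℝ) (hn : n ≤ N) (hn1 : 1 ≤ n)
    (g : ℝ → (Fin n → ℝ) → ℝ)
    (hg : ∀ s : ℝ, ∀ ω : Fin n → ℝ,
      g s ω = (1 / (n : ℝ)) * ∑ i, if ω i ≤ s then (1 : ℝ) else 0)
    (f : (Fin n → ℝ) → ℝ)
    (hf : ∀ ω : Fin n → ℝ, f ω = ⨆ s : ℝ, (g s ω - msExpectN L N n κ x hn (g s)))
    (t : ℝ) (ht : 0 ≤ t) :
    msProbN L N n κ x hn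
        (fun ω => Real.sqrt n * |f ω - msExpectN L N n κ x hn f| ≥ t) ≤
      2 * Real.exp (-(t ^ 2) / (4 * (1 - (n : ℝ) / N))) := by
  have hf' : f = fun ω => ⨆ s, (empiricalCDF s ω - msExpectN L N n κ x hn (g s)) :=
    funext fun ω => by simp only [hf, hg, empiricalCDF]
  have hsym : IsSymmetric f := hf' ▸ IsSymmetric.iSup_sub (isSymmetric_empiricalCDF n) _
  have hbd : HasBoundedDifferences (1 / n) f :=
    hf' ▸ HasBoundedDifferences.iSup_sub (hasBoundedDifferences_empiricalCDF n) _
  have hn0 : (0 : ℝ) < n := by exact_mod_cast hn1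
  obtain ⟨m, hm⟩ := exists_multislice_eq_arrangements L N κ x
  have key := uprob_le_abs_sub_expect_le hn m hsym hbd (div_nonneg ht (sqrt_nonneg n))
  have hexp : (t / √n) ^ 2 / (4 * (1 / n) ^ 2 * n * (1 - n / N)) = t ^ 2 / (4 * (1 - n / N)) := by
    rw [div_pow, sq_sqrt hn0.le, show 4 * (1 / (n : ℝ)) ^ 2 * n * (1 - n / N)
      = 4 * (1 - n / N) / n by field_simp, div_div_div_cancel_right₀ hn0.ne']
  rw [neg_div, hexp, ← neg_div] at key
  have hE : msExpectN L N n κ x hn f = 𝔼 ω ∈ arrangements m N, f (Fin.take n hn ω) := by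
    rw [msExpectN, hm, uexpect_eq_expect]
    rfl
  rw [msProbN, hm, hE]
  refine le_of_eq_of_le (congrArg _ (funext fun ω => propext ?_)) key
  exact (div_le_iff₀' (sqrt_pos.2 hn0)).symm

/-- Sub-Gaussian tails for the (centered) Kolmogorov distance between the empirical
measure of a sample without replacement and the true distribution. -/
theorem stmt7 (L N n : ℕ) (hL : 2 ≤ L) (κ : Fin L → ℕ) (hκ : ∀ ℓ, 1 ≤ κ ℓ)
    (hN : N = ∑ ℓ, κ ℓ) (x : Fin L → ℝ) (hx : StrictMono x) (hn : n ≤ N) (hn1 : 1 ≤ n)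
    (g : ℝ → (Fin n → ℝ) → ℝ)
    (hg : ∀ s : ℝ, ∀ ω : Fin n → ℝ,
      g s ω = (1 / (n : ℝ)) * ∑ i, if ω i ≤ s then (1 : ℝ) else 0)
    (f : (Fin n → ℝ) → ℝ)
    (hf : ∀ ω : Fin n → ℝ, f ω = ⨆ s : ℝ, (g s ω - msExpectN L N n κ x hn (g s)))
    (t : ℝ) (ht : 0 ≤ t) :
    msProbN L N n κ x hn
        (fun ω => Real.sqrt n * |f ω - msExpectN L N n κ x hn f| ≥ t) ≤
      2 * Real.exp (-(t ^ 2) / (4 * (1 - (n : ℝ) / N))) :=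
  stmt7_general L N n κ x hn hn1 g hg f hf t ht
end
end
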